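/- Let C be a binary linear [k+t, k] code with systematic generator matrix G = [I_k | A]. Then M(C) ≤ (k+1)k/2 + Σ_{s=2}^{t+1} C(2^t − 1, s) · (k/(2^t − 1))^s, where the right-hand side is a real number and C(·,·) denotes the binomial coefficient. -/

import Mathlib

open Finset

/-- The support of a vector `x ∈ F_2^n`: the set of nonzero coordinates. -/
def supp {n : ℕ} (x : Fin n → ZMod 2) : Set (Fin n) := {i | x i ≠ 0}

/-- `c` is a minimal codeword of the linear code (subspace) `C ≤ F_2^n`:
it is a nonzero codeword and no nonzero codeword has support properly contained in `supp c`. -/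
def IsMinimal {n : ℕ} (C : Submodule (ZMod 2) (Fin n → ZMod 2)) (c : Fin n → ZMod 2) : Prop :=
  c ∈ C ∧ c ≠ 0 ∧ ∀ c' ∈ C, c' ≠ 0 → ¬ supp c' ⊂ supp c

/-- `M(C)`: the number of minimal codewords of `C`. -/
noncomputable def Mcode {n : ℕ} (C : Submodule (ZMod 2) (Fin n → ZMod 2)) : ℕ :=
  Set.ncard {c | IsMinimal C c}

/-- The `i`-th row `g^i` of the systematic generator matrix `G = [I_k | A]`. -/
def row {k t : ℕ} (A : Fin k → Fin t → ZMod 2) (i : Fin k) : Fin (k + t) → ZMod 2 :=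
  Fin.append (Pi.single i 1) (A i)

/-- The binary linear `[k+t, k]` code with systematic generator matrix `G = [I_k | A]`. -/
def genCode {k t : ℕ} (A : Fin k → Fin t → ZMod 2) :
    Submodule (ZMod 2) (Fin (k + t) → ZMod 2) :=
  Submodule.span (ZMod 2) (Set.range (row A))

/-- `c^S = ∑_{i ∈ S} g^i`. -/
def cS {k t : ℕ} (A : Fin k → Fin t → ZMod 2) (S : Finset (Fin k)) : Fin (k + t) → ZMod 2 :=
  ∑ i ∈ S, row A i

/-- `c_I`: the restriction of a codeword to its last `t` coordinates (the information bits). -/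
def infoBits {k t : ℕ} (c : Fin (k + t) → ZMod 2) : Fin t → ZMod 2 :=
  fun j => c (Fin.natAdd k j)

/-- `a_τ(A)` : the number of indices `i` with `g^i_I = A i = τ`. -/
def aCount {k t : ℕ} (A : Fin k → Fin t → ZMod 2) (τ : Fin t → ZMod 2) : ℕ :=
  (Finset.univ.filter fun i => A i = τ).card

/-- `M_2(n, k)`: the maximum of `M(C)` over all binary linear `[n, k]` codes `C`. -/
noncomputable def M2 (n k : ℕ) : ℕ :=
  sSup {m | ∃ C : Submodule (ZMod 2) (Fin n → ZMod 2),
    Module.finrank (ZMod 2) C = k ∧ Mcode C = m}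



/-!
Codewords of `genCode A` are the sums `c^S = ∑_{i ∈ S} g^i`, and `S ↦ c^S` is injective. If
`c^S` is minimal, no nonempty `S' ⊊ S` has `∑_{i ∈ S'} A i = 0`, since otherwise `c^{S'}` is a
nonzero codeword supported on the identity part of `supp c^S`. Hence `|S| ≤ t + 1` (any `t + 1`
vectors of `F_2^t` have a nonempty zero-sum subfamily), and for `|S| ≥ 3` the columns `A i`,
`i ∈ S`, are nonzero and pairwise distinct. Such an `S` is determined by an `s`-set `T` of nonzero
vectors and one row in each class `{i | A i = τ}`, `τ ∈ T`, so there are at most the elementary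
symmetric sum `e_s(a_τ)` of them, and Maclaurin's inequality with `∑ a_τ ≤ k` bounds this by
`C(2^t - 1, s) (k / (2^t - 1))^s`. Sets of size one or two contribute at most `k + C(k, 2)`.
-/

/-- The inductive step of Maclaurin's inequality: if `z` is the mean after adding `a` to `n` numbers
of mean `y`, this is Bernoulli's inequality `y ^ (r + 1) + (r + 1) y ^ r (z - y) ≤ z ^ (r + 1)`
multiplied by `C(n + 1, r + 1)`. -/
theorem choose_mul_pow_add_le_choose_succ_mul_pow {R : Type*} [Field R] [LinearOrder R]
    [IsStrictOrderedRing R] {y a : R} (hy : 0 ≤ y) (ha : 0 ≤ a) (n r : ℕ) :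
    (n.choose (r + 1) : R) * y ^ (r + 1) + a * ((n.choose r : R) * y ^ r)
      ≤ ((n + 1).choose (r + 1) : R) * ((n * y + a) / (n + 1)) ^ (r + 1) := by
  set z := (n * y + a) / (n + 1)
  have hz : (n + 1 : R) * z = n * y + a := by
    simp only [z]; field_simp
  have hpascal : ((n + 1).choose (r + 1) : R) = n.choose r + n.choose (r + 1) := by
    exact_mod_cast Nat.choose_succ_succ n r
  have habsorb : ((n + 1 : ℕ) : R) * n.choose r = (n + 1).choose (r + 1) * (r + 1 : ℕ) := by
    exact_mod_cast Nat.add_one_mul_choose_eq n r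
  push_cast at habsorb
  have hz0 : 0 ≤ z := by positivity
  have hbernoulli : y ^ (r + 1) + (r + 1 : ℕ) * y ^ r * (z - y) ≤ (y + (z - y)) ^ (r + 1) :=
    pow_add_mul_le_add_pow hy (by linarith) (r + 1)
  calc _ = ((n + 1).choose (r + 1) : R) * (y ^ (r + 1) + (r + 1 : ℕ) * y ^ r * (z - y)) := by
        push_cast
        linear_combination (y ^ r * z - y ^ (r + 1)) * habsorb - y ^ r * (n.choose r : R) * hz
          - y ^ (r + 1) * hpascal
    _ ≤ _ := by
        rw [add_sub_cancel] at hbernoulli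
        exact mul_le_mul_of_nonneg_left hbernoulli (Nat.cast_nonneg _)

namespace Multiset

variable {R : Type*}

theorem esymm_cons_succ [CommSemiring R] (a : R) (m : Multiset R) (r : ℕ) :
    (a ::ₘ m).esymm (r + 1) = m.esymm (r + 1) + a * m.esymm r := by
  simp only [esymm, powersetCard_cons, map_add, sum_add, map_map, Function.comp_def, prod_cons,
    sum_map_mul_left]

variable [Field R] [LinearOrder R] [IsStrictOrderedRing R]

theorem esymm_le_choose_mul_div_pow (m : Multiset R) (hm : ∀ x ∈ m, 0 ≤ x) (s : ℕ) :
    m.esymm s ≤ (card m).choose s * (m.sum / card m) ^ s := by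
  induction m using Multiset.induction_on generalizing s with
  | empty => cases s <;> simp [esymm, powersetCard_zero_right]
  | cons a m ih =>
    have ha : 0 ≤ a := hm a (mem_cons_self a m)
    have hm' : ∀ x ∈ m, 0 ≤ x := fun x hx => hm x (mem_cons_of_mem hx)
    have hsum : (card m : R) * (m.sum / card m) = m.sum := by
      rcases eq_or_ne (card m) 0 with h | h
      · simp [card_eq_zero.1 h]
      · exact mul_div_cancel₀ _ (Nat.cast_ne_zero.2 h)
    cases s with
    | zero => simp [esymm]
    | succ r =>
      calc (a ::ₘ m).esymm (r + 1) = m.esymm (r + 1) + a * m.esymm r := esymm_cons_succ a m r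
        _ ≤ (card m).choose (r + 1) * (m.sum / card m) ^ (r + 1)
            + a * ((card m).choose r * (m.sum / card m) ^ r) :=
          add_le_add (ih hm' _) (mul_le_mul_of_nonneg_left (ih hm' r) ha)
        _ ≤ _ := by
          have := choose_mul_pow_add_le_choose_succ_mul_pow
            (div_nonneg (sum_nonneg hm') (Nat.cast_nonneg (card m))) ha (card m) r
          rw [hsum, add_comm m.sum] at this
          rw [card_cons, sum_cons]
          push_cast
          exact this

end Multiset

theorem Finset.sum_powersetCard_prod_le_choose_mul_div_pow {ι R : Type*} [Field R] [LinearOrder R]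
    [IsStrictOrderedRing R] (B : Finset ι) (f : ι → R) (hf : ∀ i ∈ B, 0 ≤ f i) (s : ℕ) :
    ∑ T ∈ B.powersetCard s, ∏ i ∈ T, f i
      ≤ (B.card.choose s : R) * ((∑ i ∈ B, f i) / B.card) ^ s := by
  simpa [Finset.esymm_map_val] using
    Multiset.esymm_le_choose_mul_div_pow (B.val.map f) (by simpa using hf) s

theorem ZMod.sum_filter_ne_zero_eq_sum_smul {ι V : Type*} [AddCommGroup V] [Module (ZMod 2) V]
    (s : Finset ι) (g : ι → ZMod 2) (v : ι → V) :
    ∑ i ∈ s with g i ≠ 0, v i = ∑ i ∈ s, g i • v i := by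
  rw [Finset.sum_filter]
  refine Finset.sum_congr rfl fun i _ => ?_
  have : ∀ z : ZMod 2, z = 0 ∨ z = 1 := by decide
  rcases this (g i) with h | h <;> simp [h]

theorem exists_nonempty_subset_sum_eq_zero {ι V : Type*} [AddCommGroup V] [Module (ZMod 2) V]
    [FiniteDimensional (ZMod 2) V] (v : ι → V) {T : Finset ι}
    (hT : Module.finrank (ZMod 2) V < T.card) :
    ∃ T' ⊆ T, T'.Nonempty ∧ ∑ i ∈ T', v i = 0 := by
  classical
  have hdep : ¬ LinearIndepOn (ZMod 2) v (T : Set ι) := fun h => by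
    simpa using (h.fintype_card_le_finrank.trans_lt hT)
  obtain ⟨g, hg, i, hi, hgi⟩ := not_linearIndepOn_finset_iff.1 hdep
  refine ⟨T.filter (g · ≠ 0), Finset.filter_subset _ _,
    ⟨i, Finset.mem_filter.2 ⟨hi, hgi⟩⟩, ?_⟩
  rw [ZMod.sum_filter_ne_zero_eq_sum_smul, hg]

theorem card_injOn_le_sum_prod_card_fiber {α β : Type*} [Fintype α] [DecidableEq α]
    [DecidableEq β] (f : α → β) (B : Finset β) (s : ℕ) :
    (univ.filter fun S : Finset α => S.card = s ∧ Set.InjOn f S ∧ ∀ i ∈ S, f i ∈ B).card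
      ≤ ∑ T ∈ B.powersetCard s, ∏ b ∈ T, (univ.filter fun i => f i = b).card := by
  simp only [← Finset.card_pi, ← Finset.card_sigma]
  -- `S` is the image of the section of `f` over `f '' S` that picks the preimages in `S`.
  refine Finset.card_le_card_of_surjOn (fun x => x.1.attach.image fun b => x.2 b.1 b.2) ?_
  intro S hS
  simp only [Finset.coe_filter, Finset.mem_univ, true_and, Set.mem_ofPred_eq] at hS
  obtain ⟨hcard, hinj, hB⟩ := hS
  refine ⟨⟨S.image f, fun b hb => (Finset.mem_image.1 hb).choose⟩, ?_, ?_⟩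
  · simp only [Finset.mem_coe, Finset.mem_sigma, Finset.mem_powersetCard, Finset.mem_pi,
      Finset.mem_filter, Finset.mem_univ, true_and]
    refine ⟨⟨fun b hb => ?_, by rw [Finset.card_image_of_injOn hinj, hcard]⟩,
      fun b hb => (Finset.mem_image.1 hb).choose_spec.2⟩
    obtain ⟨i, hi, rfl⟩ := Finset.mem_image.1 hb
    exact hB i hi
  · ext i
    rw [Finset.mem_image]
    constructor
    · rintro ⟨⟨b, hb⟩, -, rfl⟩
      exact (Finset.mem_image.1 hb).choose_spec.1
    · intro hi
      have hfi := Finset.mem_image_of_mem f hi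
      obtain ⟨hj, hfj⟩ := (Finset.mem_image.1 hfi).choose_spec
      exact ⟨⟨f i, hfi⟩, Finset.mem_attach _ _, hinj hj hi hfj⟩

section SystematicCode

variable {k t : ℕ} {A : Fin k → Fin t → ZMod 2}

theorem cS_apply_castAdd (S : Finset (Fin k)) (i : Fin k) :
    cS A S (Fin.castAdd t i) = if i ∈ S then 1 else 0 := by
  simp [cS, Finset.sum_apply, row, Pi.single_apply]

theorem infoBits_cS (S : Finset (Fin k)) :
    infoBits (cS A S) = ∑ i ∈ S, A i := by
  ext j
  simp [infoBits, cS, Finset.sum_apply, row]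

theorem castAdd_mem_supp_cS {S : Finset (Fin k)} {i : Fin k} :
    Fin.castAdd t i ∈ supp (cS A S) ↔ i ∈ S := by
  by_cases hi : i ∈ S <;> simp [supp, cS_apply_castAdd, hi]

theorem cS_injective : Function.Injective (cS A) := by
  intro S S' h
  ext i
  rw [← castAdd_mem_supp_cS (A := A), h, castAdd_mem_supp_cS]

theorem cS_ne_zero {S : Finset (Fin k)} (hS : S.Nonempty) : cS A S ≠ 0 := by
  obtain ⟨i, hi⟩ := hS
  intro h
  simpa [h, supp] using (castAdd_mem_supp_cS (A := A)).2 hi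

theorem cS_mem_genCode (S : Finset (Fin k)) :
    cS A S ∈ genCode A :=
  Submodule.sum_mem _ fun i _ => Submodule.subset_span ⟨i, rfl⟩

theorem mem_genCode_iff {c : Fin (k + t) → ZMod 2} :
    c ∈ genCode A ↔ ∃ S, cS A S = c := by
  refine ⟨fun hc => ?_, fun ⟨S, hS⟩ => hS ▸ cS_mem_genCode S⟩
  obtain ⟨g, rfl⟩ := (Submodule.mem_span_range_iff_exists_fun (ZMod 2)).1 hc
  exact ⟨univ.filter (g · ≠ 0), ZMod.sum_filter_ne_zero_eq_sum_smul _ _ _⟩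

open Classical in
theorem Mcode_genCode_eq_card :
    Mcode (genCode A) = (univ.filter fun S => IsMinimal (genCode A) (cS A S)).card := by
  have himage : {c | IsMinimal (genCode A) c} = cS A '' {S | IsMinimal (genCode A) (cS A S)} := by
    ext c
    refine ⟨fun hc => ?_, fun ⟨S, hS, hc⟩ => hc ▸ hS⟩
    obtain ⟨S, rfl⟩ := mem_genCode_iff.1 hc.1
    exact ⟨S, hc, rfl⟩
  rw [Mcode, himage, Set.ncard_image_of_injective _ cS_injective, ← Set.ncard_coe_finset]
  simp

theorem IsMinimal.sum_ne_zero {S S' : Finset (Fin k)} (h : IsMinimal (genCode A) (cS A S))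
    (hS' : S' ⊂ S) (hne : S'.Nonempty) : ∑ i ∈ S', A i ≠ 0 := by
  intro hsum
  refine h.2.2 (cS A S') (cS_mem_genCode S') (cS_ne_zero hne) ?_
  have hsub : supp (cS A S') ⊆ supp (cS A S) := by
    intro y hy
    induction y using Fin.addCases with
    | left i => exact castAdd_mem_supp_cS.2 (hS'.1 (castAdd_mem_supp_cS.1 hy))
    | right j =>
      have : infoBits (cS A S') j = 0 := by rw [infoBits_cS, hsum, Pi.zero_apply]
      exact absurd this hy
  obtain ⟨l, hlS, hlS'⟩ := Finset.exists_of_ssubset hS'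
  exact (Set.ssubset_iff_of_subset hsub).2
    ⟨_, castAdd_mem_supp_cS.2 hlS, mt castAdd_mem_supp_cS.1 hlS'⟩

theorem IsMinimal.card_le {S : Finset (Fin k)} (h : IsMinimal (genCode A) (cS A S)) :
    S.card ≤ t + 1 := by
  by_contra! hcard
  obtain ⟨j, hj⟩ : S.Nonempty := Finset.card_pos.1 (by omega)
  obtain ⟨S', hS', hne, hsum⟩ := exists_nonempty_subset_sum_eq_zero A (T := S.erase j)
    (by simp [Finset.card_erase_of_mem hj]; omega)
  exact h.sum_ne_zero (Finset.ssubset_of_subset_of_ssubset hS' (Finset.erase_ssubset hj)) hne hsum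

theorem IsMinimal.apply_ne_zero {S : Finset (Fin k)} (h : IsMinimal (genCode A) (cS A S))
    (hS : 2 ≤ S.card) {i : Fin k} (hi : i ∈ S) : A i ≠ 0 := by
  have hsub : {i} ⊂ S := Finset.ssubset_iff_subset_ne.2
    ⟨Finset.singleton_subset_iff.2 hi, fun h => by simp [← h] at hS⟩
  simpa using h.sum_ne_zero hsub (Finset.singleton_nonempty i)

theorem IsMinimal.injOn {S : Finset (Fin k)} (h : IsMinimal (genCode A) (cS A S))
    (hS : 3 ≤ S.card) : Set.InjOn A S := by
  intro i hi j hj hij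
  by_contra hne
  have hsub : {i, j} ⊂ S := Finset.ssubset_iff_subset_ne.2
    ⟨Finset.insert_subset hi (Finset.singleton_subset_iff.2 hj),
      fun h => by rw [← h, Finset.card_pair hne] at hS; omega⟩
  refine h.sum_ne_zero hsub (Finset.insert_nonempty _ _) ?_
  rw [Finset.sum_pair hne, hij]
  ext x
  exact CharTwo.add_self_eq_zero _

theorem sum_aCount_erase_zero_le :
    ∑ τ ∈ univ.erase 0, aCount A τ ≤ k := by
  unfold aCount
  rw [Finset.sum_card_fiberwise_eq_card_filter]
  exact (Finset.card_filter_le _ _).trans (by simp)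

open Classical in
theorem Mcode_genCode_le_card_add_sum :
    Mcode (genCode A)
      ≤ (univ.filter fun S => IsMinimal (genCode A) (cS A S) ∧ S.card ≤ 2).card
        + ∑ s ∈ Icc 3 (t + 1),
            (univ.filter fun S => IsMinimal (genCode A) (cS A S) ∧ S.card = s).card := by
  rw [Mcode_genCode_eq_card, ← Finset.card_filter_add_card_filter_not (fun S => S.card ≤ 2)]
  simp only [Finset.filter_filter]
  refine Nat.add_le_add_left ?_ _
  rw [Finset.card_eq_sum_card_fiberwise (f := Finset.card) (t := Icc 3 (t + 1))]
  · refine Finset.sum_le_sum fun s _ => Finset.card_le_card fun S => ?_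
    simp only [Finset.mem_filter, Finset.mem_univ, true_and]
    tauto
  · intro S hS
    rw [Finset.mem_coe, Finset.mem_filter] at hS
    rw [Finset.coe_Icc, Set.mem_Icc]
    exact ⟨by omega, hS.2.1.card_le⟩

open Classical in
theorem card_isMinimal_card_le_two :
    ((univ.filter fun S => IsMinimal (genCode A) (cS A S) ∧ S.card ≤ 2).card : ℝ)
      ≤ ((k : ℝ) + 1) * k / 2 := by
  have hsub : (univ.filter fun S => IsMinimal (genCode A) (cS A S) ∧ S.card ≤ 2)
      ⊆ univ.powersetCard 1 ∪ univ.powersetCard 2 := by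
    intro S hS
    simp only [Finset.mem_filter, Finset.mem_univ, true_and] at hS
    have hne : S.Nonempty := Finset.nonempty_iff_ne_empty.2 fun h => hS.1.2.1 (by simp [h, cS])
    have hpos := hne.card_pos
    simp only [Finset.mem_union, Finset.mem_powersetCard, Finset.subset_univ, true_and]
    omega
  have hcard := (Finset.card_le_card hsub).trans (Finset.card_union_le _ _)
  simp only [Finset.card_powersetCard, Finset.card_univ, Fintype.card_fin,
    Nat.choose_one_right] at hcard
  calc _ ≤ ((k + k.choose 2 : ℕ) : ℝ) := by exact_mod_cast hcard
    _ = _ := by push_cast [Nat.cast_choose_two]; ring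

open Classical in
theorem card_isMinimal_card_eq_le {s : ℕ} (hs : 3 ≤ s) :
    ((univ.filter fun S => IsMinimal (genCode A) (cS A S) ∧ S.card = s).card : ℝ)
      ≤ ((2 ^ t - 1 : ℕ).choose s : ℝ) * ((k : ℝ) / ((2 ^ t - 1 : ℕ) : ℝ)) ^ s := by
  set B := (univ : Finset (Fin t → ZMod 2)).erase 0
  have hcount : (univ.filter fun S => IsMinimal (genCode A) (cS A S) ∧ S.card = s).card
      ≤ ∑ T ∈ B.powersetCard s, ∏ τ ∈ T, aCount A τ := by
    refine (Finset.card_le_card fun S hS => ?_).trans (card_injOn_le_sum_prod_card_fiber A B s)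
    simp only [Finset.mem_filter, Finset.mem_univ, true_and] at hS ⊢
    obtain ⟨hmin, rfl⟩ := hS
    exact ⟨rfl, hmin.injOn hs, fun i hi => Finset.mem_erase.2
      ⟨hmin.apply_ne_zero (by omega) hi, Finset.mem_univ _⟩⟩
  have hB : B.card = 2 ^ t - 1 := by simp [B, Finset.card_erase_of_mem, ZMod.card]
  have hsum : ∑ τ ∈ B, (aCount A τ : ℝ) ≤ k := by exact_mod_cast sum_aCount_erase_zero_le
  calc _ ≤ ∑ T ∈ B.powersetCard s, ∏ τ ∈ T, (aCount A τ : ℝ) := by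
        exact_mod_cast hcount
    _ ≤ _ := Finset.sum_powersetCard_prod_le_choose_mul_div_pow _ _
        (fun _ _ => Nat.cast_nonneg _) s
    _ ≤ _ := by rw [hB]; gcongr

end SystematicCode

theorem stmt15 (k t : ℕ) (A : Fin k → Fin t → ZMod 2) :
    (Mcode (genCode A) : ℝ) ≤ ((k : ℝ) + 1) * k / 2 +
      ∑ s ∈ Finset.Icc 2 (t + 1),
        (((2 ^ t - 1 : ℕ).choose s : ℝ)) * ((k : ℝ) / ((2 ^ t - 1 : ℕ) : ℝ)) ^ s := by
  classical
  calc (Mcode (genCode A) : ℝ)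
      ≤ (univ.filter fun S => IsMinimal (genCode A) (cS A S) ∧ S.card ≤ 2).card
        + ∑ s ∈ Icc 3 (t + 1),
            ((univ.filter fun S => IsMinimal (genCode A) (cS A S) ∧ S.card = s).card : ℝ) := by
        exact_mod_cast Mcode_genCode_le_card_add_sum
    _ ≤ ((k : ℝ) + 1) * k / 2 + ∑ s ∈ Icc 3 (t + 1),
          ((2 ^ t - 1 : ℕ).choose s : ℝ) * ((k : ℝ) / ((2 ^ t - 1 : ℕ) : ℝ)) ^ s :=
        add_le_add card_isMinimal_card_le_two
          (Finset.sum_le_sum fun s hs => card_isMinimal_card_eq_le (Finset.mem_Icc.1 hs).1)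
    _ ≤ _ := by
        have hsub : Icc 3 (t + 1) ⊆ Icc 2 (t + 1) := Finset.Icc_subset_Icc_left (by norm_num)
        exact add_le_add le_rfl (Finset.sum_le_sum_of_subset_of_nonneg hsub
          fun _ _ _ => by positivity)
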